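/- Let E be a rearrangement-invariant quasi-Banach function space on (0,∞) with functional ρ_E and lower Boyd index p_E. Let 0 < q_0 ≤ ∞ and 0 < p_0 < p_E. Then (L_{p_0,q_0}, L_∞)_{p_0,p_0;E} = E with equivalent quasi-norms: there exist constants c, C > 0 such that for every f ∈ L_{p_0,q_0} + L_∞, c ρ_E(f^*) ≤ ρ_E(t ↦ t^{-1/p_0} K(t^{1/p_0}, f; L_{p_0,q_0}, L_∞)) ≤ C ρ_E(f^*). -/

import Mathlib

/-!
Lower bound: for any splitting `f = g + h`, `f^*(t) ≤ g^*(t) + ‖h‖_∞`, while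
`t^{1/p₀} g^*(t) ≲ ‖g‖_{p₀,q₀}` (integrate `g^* ≥ g^*(t)` over `(0, t]`); hence
`f^*(t) ≲ t^{-1/p₀} K(t^{1/p₀}, f)` pointwise.

Upper bound: cutting `f` at height `f^*(t)` gives
`K(t^{1/p₀}, f) ≤ ‖(|f| - f^*(t))₊‖_{p₀,q₀} + t^{1/p₀} f^*(t)`, and the cut-off part lives
on `(0, t]`. Sorting `s ∈ (0, t]` into the blocks `(B^{k+1} t, B^k t]` gives
`s^{1/p₀} f^*(s) ≲ t^{1/p₀ - ε} s^ε ∑_k B^{k(1/p₀ - ε)} f^*(B^{k+1} t)`, so the Lorentz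
quasi-norm of the cut-off part is `≲ t^{1/p₀}` times this series. Since `p₀ < p_E`,
`‖D_a‖ ≲ a^{-1/p'}` with `1/p' = 1/p₀ - 2ε`, so the `k`-th term of the series has
`E`-quasi-norm `≲ (C_E B^ε)^k ρ_E(f^*)` even after iterating the quasi-triangle inequality,
and a `B` with `C_E B^ε ≤ 1/2` makes it summable.
-/
open MeasureTheory Set Filter
open scoped ENNReal NNReal

noncomputable section

/-- The non-increasing rearrangement of a function on `(0, ∞)` (with Lebesgue measure):
`f^*(t) = inf {λ : |{s > 0 : |f(s)| > λ}| ≤ t}`. -/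
def rearr (f : ℝ → ℝ) (t : ℝ) : ℝ≥0∞ :=
  sInf {lam : ℝ≥0∞ |
    volume {s : ℝ | 0 < s ∧ lam < ENNReal.ofReal |f s|} ≤ ENNReal.ofReal t}

/-- The Lorentz quasi-norm `‖f‖_{p,q}` on `(0,∞)`, `0 < p < ∞`, `0 < q ≤ ∞`. -/
def lorentzNorm (p : ℝ) (q : ℝ≥0∞) (f : ℝ → ℝ) : ℝ≥0∞ :=
  if q = ⊤ then ⨆ t ∈ Set.Ioi (0 : ℝ), ENNReal.ofReal (t ^ (1 / p)) * rearr f t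
  else
    (∫⁻ t in Set.Ioi (0 : ℝ),
        (ENNReal.ofReal (t ^ (1 / p)) * rearr f t) ^ q.toReal / ENNReal.ofReal t) ^
      (1 / q.toReal)

/-- A rearrangement-invariant quasi-Banach function space on `(0,∞)`, given by the
functional `ρ` on (extended-)nonnegative measurable functions on `(0,∞)`. -/
structure RIQBFS where
  ρ : (ℝ → ℝ≥0∞) → ℝ≥0∞
  C : ℝ
  one_le_C : 1 ≤ C
  eq_zero_iff : ∀ f : ℝ → ℝ≥0∞, ρ f = 0 ↔ f =ᵐ[volume.restrict (Set.Ioi (0 : ℝ))] 0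
  smul_eq : ∀ (c : ℝ≥0) (f : ℝ → ℝ≥0∞), ρ (fun t => (c : ℝ≥0∞) * f t) = (c : ℝ≥0∞) * ρ f
  quasi_triangle : ∀ f g : ℝ → ℝ≥0∞, ρ (fun t => f t + g t) ≤ ENNReal.ofReal C * (ρ f + ρ g)
  mono : ∀ f g : ℝ → ℝ≥0∞,
    (∀ᵐ t ∂(volume.restrict (Set.Ioi (0 : ℝ))), g t ≤ f t) → ρ g ≤ ρ f
  fatou : ∀ (fn : ℕ → ℝ → ℝ≥0∞) (f : ℝ → ℝ≥0∞),
    (∀ n, ∀ᵐ t ∂(volume.restrict (Set.Ioi (0 : ℝ))), fn n t ≤ fn (n + 1) t) →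
    (∀ᵐ t ∂(volume.restrict (Set.Ioi (0 : ℝ))),
      Filter.Tendsto (fun n => fn n t) Filter.atTop (nhds (f t))) →
    Filter.Tendsto (fun n => ρ (fn n)) Filter.atTop (nhds (ρ f))
  indicator_finite : ∀ ω : Set ℝ, MeasurableSet ω → ω ⊆ Set.Ioi (0 : ℝ) → volume ω < ⊤ →
    ρ (Set.indicator ω fun _ => 1) < ⊤

/-- The quasi-norm of the space `E`: `‖f‖_E = ρ_E (f^*)`. -/
def RIQBFS.normE (E : RIQBFS) (f : ℝ → ℝ) : ℝ≥0∞ := E.ρ (rearr f)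

/-- The operator norm of the dilation operator `(D_a f)(t) = f (a t)` on `E`. -/
def dilNorm (E : RIQBFS) (a : ℝ) : ℝ≥0∞ :=
  ⨆ (f : ℝ → ℝ) (_ : Measurable f) (_ : E.normE f ≤ 1), E.normE fun t => f (a * t)

/-- The lower Boyd index
`p_E = sup {p > 0 : ∃ c > 0, ∀ 0 < a < 1, ‖D_a‖ ≤ c a^{-1/p}}` (an element of `(0, ∞]`). -/
def lowerBoyd (E : RIQBFS) : ℝ≥0∞ :=
  sSup (ENNReal.ofReal ''
    {p : ℝ | 0 < p ∧ ∃ c : ℝ, 0 < c ∧ ∀ a : ℝ, 0 < a → a < 1 →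
      dilNorm E a ≤ ENNReal.ofReal (c * a ^ (-(1 / p)))})

/-- The upper Boyd index
`q_E = inf {q > 0 : ∃ c > 0, ∀ a ≥ 1, ‖D_a‖ ≤ c a^{-1/q}}` (an element of `(0, ∞]`,
with `inf ∅ = ∞`). -/
def upperBoyd (E : RIQBFS) : ℝ≥0∞ :=
  sInf (ENNReal.ofReal ''
    {q : ℝ | 0 < q ∧ ∃ c : ℝ, 0 < c ∧ ∀ a : ℝ, 1 ≤ a →
      dilNorm E a ≤ ENNReal.ofReal (c * a ^ (-(1 / q)))})

/-- The Peetre K-functional for the couple `(L_{p₀,q₀}, L_∞)` on `(0,∞)`. -/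
def lorentzKinf (p0 : ℝ) (q0 : ℝ≥0∞) (t : ℝ) (f : ℝ → ℝ) : ℝ≥0∞ :=
  ⨅ (g : (ℝ → ℝ) × (ℝ → ℝ)) (_ : g.1 + g.2 = f ∧ Measurable g.1 ∧ Measurable g.2),
    lorentzNorm p0 q0 g.1 +
      ENNReal.ofReal t * eLpNorm g.2 ⊤ (volume.restrict (Set.Ioi (0 : ℝ)))

def distf (f : ℝ → ℝ) (lam : ℝ≥0∞) : ℝ≥0∞ :=
  volume {s : ℝ | 0 < s ∧ lam < ENNReal.ofReal |f s|}

theorem distf_antitone (f : ℝ → ℝ) : Antitone (distf f) :=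
  fun _ _ h => measure_mono fun _ ⟨hs, hlt⟩ => ⟨hs, h.trans_lt hlt⟩

theorem rearr_le_of_distf_le {f : ℝ → ℝ} {t : ℝ} {lam : ℝ≥0∞}
    (h : distf f lam ≤ ENNReal.ofReal t) : rearr f t ≤ lam :=
  sInf_le h

theorem distf_le_of_rearr_lt {f : ℝ → ℝ} {t : ℝ} {lam : ℝ≥0∞} (h : rearr f t < lam) :
    distf f lam ≤ ENNReal.ofReal t := by
  obtain ⟨mu, hmu, hlt⟩ := sInf_lt_iff.mp h
  exact (distf_antitone f hlt.le).trans hmu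

/-- The infimum defining `f^*(t)` is attained, by right continuity of the distribution
function. -/
theorem distf_rearr_le {f : ℝ → ℝ} {t : ℝ} (h : rearr f t ≠ ⊤) :
    distf f (rearr f t) ≤ ENNReal.ofReal t := by
  have hset : {s : ℝ | 0 < s ∧ rearr f t < ENNReal.ofReal |f s|} =
      ⋃ n : ℕ,
        {s : ℝ | 0 < s ∧ rearr f t + (n : ℝ≥0∞)⁻¹ < ENNReal.ofReal |f s|} := by
    ext s
    simp only [mem_ofPred_eq, mem_iUnion]
    constructor
    · rintro ⟨hs, hlt⟩
      obtain ⟨r, hr0, hr⟩ := ENNReal.lt_iff_exists_add_pos_lt.mp hlt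
      obtain ⟨n, hn⟩ := ENNReal.exists_inv_nat_lt (ENNReal.coe_ne_zero.mpr hr0.ne')
      exact ⟨n, hs, (ENNReal.add_lt_add_left h hn).trans hr⟩
    · rintro ⟨n, hs, hlt⟩
      exact ⟨hs, le_self_add.trans_lt hlt⟩
  have hmono : Monotone fun n : ℕ =>
      {s : ℝ | 0 < s ∧ rearr f t + (n : ℝ≥0∞)⁻¹ < ENNReal.ofReal |f s|} :=
    fun n m hnm s ⟨hs, hlt⟩ =>
      ⟨hs, (add_le_add le_rfl (ENNReal.inv_le_inv.mpr (Nat.cast_le.mpr hnm))).trans_lt hlt⟩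
  rw [distf, hset, hmono.measure_iUnion]
  exact iSup_le fun n => distf_le_of_rearr_lt
    (ENNReal.lt_add_right h (ENNReal.inv_ne_zero.mpr (ENNReal.natCast_ne_top n)))

theorem rearr_antitone (f : ℝ → ℝ) : Antitone (rearr f) :=
  fun _ _ h => sInf_le_sInf fun _ hl => hl.trans (ENNReal.ofReal_le_ofReal h)

theorem rearr_le_rearr_of_abs_le {f g : ℝ → ℝ} (h : ∀ s, 0 < s → |g s| ≤ |f s|)
    (t : ℝ) : rearr g t ≤ rearr f t := by
  refine sInf_le_sInf fun lam hlam => le_trans (measure_mono ?_) hlam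
  rintro s ⟨hs, hlt⟩
  exact ⟨hs, hlt.trans_le (ENNReal.ofReal_le_ofReal (h s hs))⟩

theorem rearr_add_le (g h : ℝ → ℝ) (t : ℝ) :
    rearr (g + h) t ≤ rearr g t + eLpNorm h ⊤ (volume.restrict (Ioi 0)) := by
  have hM : ∀ᵐ s, s ∈ Ioi (0 : ℝ) →
      ENNReal.ofReal |h s| ≤ eLpNorm h ⊤ (volume.restrict (Ioi 0)) := by
    rw [← ae_restrict_iff' measurableSet_Ioi]
    filter_upwards [ae_le_eLpNormEssSup (f := h)] with s hs
    rwa [eLpNorm_exponent_top, ← Real.enorm_eq_ofReal_abs]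
  conv_rhs => rw [rearr, ENNReal.sInf_add]
  refine le_iInf₂ fun lam hlam => rearr_le_of_distf_le (le_trans (measure_mono_ae ?_) hlam)
  filter_upwards [hM] with s hs
  rintro ⟨hs0, hlt⟩
  refine ⟨hs0, lt_of_not_ge fun hle => hlt.not_ge ?_⟩
  calc ENNReal.ofReal |(g + h) s| ≤ ENNReal.ofReal |g s| + ENNReal.ofReal |h s| := by
        rw [← ENNReal.ofReal_add (abs_nonneg _) (abs_nonneg _)]
        exact ENNReal.ofReal_le_ofReal (abs_add_le _ _)
    _ ≤ lam + _ := add_le_add hle (hs hs0)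

theorem rearr_const_mul (f : ℝ → ℝ) {r : ℝ} (hr : 0 < r) (t : ℝ) :
    rearr (fun s => r * f s) t = ENNReal.ofReal r * rearr f t := by
  let φ := ENNReal.mulLeftOrderIso (ENNReal.ofReal r)
    (ENNReal.isUnit_iff.mpr ⟨by simpa using hr, ENNReal.ofReal_ne_top⟩)
  have hdistf : ∀ lam, distf (fun s => r * f s) (φ lam) = distf f lam := fun lam => by
    simp only [distf, φ, ENNReal.mulLeftOrderIso_apply, abs_mul, abs_of_pos hr,
      ENNReal.ofReal_mul hr.le]
    congr 1
    ext s
    exact and_congr_right fun _ =>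
      ENNReal.mul_lt_mul_iff_right (by simpa using hr) ENNReal.ofReal_ne_top
  have hset : {lam | distf (fun s => r * f s) lam ≤ ENNReal.ofReal t} =
      φ '' {lam | distf f lam ≤ ENNReal.ofReal t} := by
    rw [φ.image_eq_preimage_symm]
    ext lam
    simp only [mem_ofPred_eq, mem_preimage, ← hdistf (φ.symm lam), OrderIso.apply_symm_apply]
  change sInf {lam | distf _ lam ≤ _} = _
  rw [hset, sInf_image, ← φ.map_sInf]
  rfl

theorem rearr_comp_mul (f : ℝ → ℝ) {a : ℝ} (ha : 0 < a) (t : ℝ) :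
    rearr (fun s => f (a * s)) t = rearr f (a * t) := by
  have hdistf : ∀ lam, distf (fun s => f (a * s)) lam = ENNReal.ofReal a⁻¹ * distf f lam :=
    fun lam => by
      rw [distf, distf, ← abs_of_pos (inv_pos.mpr ha), ← Real.volume_preimage_mul_left ha.ne']
      congr 1
      ext s
      simp only [mem_ofPred_eq, mem_preimage, mul_pos_iff_of_pos_left ha]
  unfold rearr
  congr 1
  ext lam
  simp only [mem_ofPred_eq]
  change distf _ lam ≤ _ ↔ distf f lam ≤ _
  rw [hdistf, ENNReal.ofReal_inv_of_pos ha, ← ENNReal.div_eq_inv_mul,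
    ENNReal.div_le_iff_le_mul (Or.inl (by simpa using ha)) (Or.inl ENNReal.ofReal_ne_top),
    mul_comm, ← ENNReal.ofReal_mul ha.le]

theorem rearr_eq_zero_of_ae {f : ℝ → ℝ} (h : rearr f =ᵐ[volume.restrict (Ioi 0)] 0)
    {t : ℝ} (ht : 0 < t) : rearr f t = 0 := by
  have : (ae (volume.restrict (Ioo (0 : ℝ) t))).NeBot := ae_restrict_neBot.mpr (by simp [ht])
  have h' :=
    ae_restrict_of_ae_restrict_of_subset (Ioo_subset_Ioi_self : Ioo (0 : ℝ) t ⊆ Ioi 0) h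
  obtain ⟨s, hs0, hs⟩ := (h'.and (ae_restrict_mem measurableSet_Ioo)).exists
  exact le_antisymm ((rearr_antitone f hs.2.le).trans_eq hs0) zero_le

theorem lintegral_Ioc_rpow_sub_one {r : ℝ} (hr : 0 < r) {t : ℝ} (ht : 0 ≤ t) :
    ∫⁻ x in Ioc 0 t, ENNReal.ofReal (x ^ (r - 1)) = ENNReal.ofReal (t ^ r / r) := by
  have hint : IntervalIntegrable (fun x : ℝ => x ^ (r - 1)) volume 0 t :=
    intervalIntegral.intervalIntegrable_rpow' (by linarith)
  rw [← ofReal_integral_eq_lintegral_ofReal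
      ((intervalIntegrable_iff_integrableOn_Ioc_of_le ht).mp hint)
      (ae_restrict_of_forall_mem measurableSet_Ioc fun x hx => Real.rpow_nonneg hx.1.le _),
    ← intervalIntegral.integral_of_le ht, integral_rpow (Or.inl (by linarith))]
  simp [Real.zero_rpow hr.ne']

theorem lintegral_Ioc_rpow_rpow_one_div {a r : ℝ} (ha : 0 < a) (hr : 0 < r) {t : ℝ}
    (ht : 0 ≤ t) :
    (∫⁻ x in Ioc 0 t, ENNReal.ofReal (x ^ (a * r - 1))) ^ (1 / r) =
      ENNReal.ofReal ((a * r)⁻¹ ^ (1 / r) * t ^ a) := by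
  have har : 0 < a * r := mul_pos ha hr
  rw [lintegral_Ioc_rpow_sub_one har ht, ENNReal.ofReal_rpow_of_nonneg (by positivity)
    (by positivity), Real.div_rpow (by positivity) har.le, ← Real.rpow_mul ht,
    show a * r * (1 / r) = a by field_simp, div_eq_mul_inv, ← Real.inv_rpow har.le, mul_comm]

theorem ofReal_rpow_rpow_div {x : ℝ} (hx : 0 < x) (a : ℝ) {r : ℝ} (hr : 0 ≤ r) :
    ENNReal.ofReal (x ^ a) ^ r / ENNReal.ofReal x = ENNReal.ofReal (x ^ (a * r - 1)) := by
  rw [ENNReal.ofReal_rpow_of_nonneg (Real.rpow_nonneg hx.le _) hr, ← Real.rpow_mul hx.le,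
    ← ENNReal.ofReal_div_of_pos hx, Real.rpow_sub_one hx.ne']

/-- `(∫₀ᵗ (x^a)^q dx/x)^{1/q} = lorentzConst a q * t^a`, the Lorentz quasi-norm of a power
truncated at `t` (read as a supremum when `q = ∞`). -/
def lorentzConst (a : ℝ) (q : ℝ≥0∞) : ℝ :=
  if q = ⊤ then 1 else (a * q.toReal)⁻¹ ^ (1 / q.toReal)

theorem lorentzConst_pos {a : ℝ} {q : ℝ≥0∞} (ha : 0 < a) (hq : 0 < q) :
    0 < lorentzConst a q := by
  unfold lorentzConst
  split_ifs with hqt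
  · exact one_pos
  · exact Real.rpow_pos_of_pos (inv_pos.mpr (mul_pos ha (ENNReal.toReal_pos hq.ne' hqt))) _

theorem ofReal_lorentzConst_mul_le_lorentzNorm {p : ℝ} {q : ℝ≥0∞} (hp : 0 < p)
    (hq : 0 < q) (g : ℝ → ℝ) {s : ℝ} (hs : 0 < s) :
    ENNReal.ofReal (lorentzConst (1 / p) q) * (ENNReal.ofReal (s ^ (1 / p)) * rearr g s) ≤
      lorentzNorm p q g := by
  rw [lorentzNorm, lorentzConst]
  split_ifs with hqt
  · rw [ENNReal.ofReal_one, one_mul]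
    exact le_iSup₂_of_le (f := fun t _ => ENNReal.ofReal (t ^ (1 / p)) * rearr g t) s hs le_rfl
  set r := q.toReal
  have hr : 0 < r := ENNReal.toReal_pos hq.ne' hqt
  have hint : rearr g s ^ r * ∫⁻ x in Ioc 0 s, ENNReal.ofReal (x ^ (1 / p * r - 1)) ≤
      ∫⁻ t in Ioi 0, (ENNReal.ofReal (t ^ (1 / p)) * rearr g t) ^ r / ENNReal.ofReal t := by
    rw [← lintegral_const_mul _ (by fun_prop)]
    refine (setLIntegral_mono' measurableSet_Ioc fun x hx => ?_).trans
      (lintegral_mono_set Ioc_subset_Ioi_self)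
    rw [← ofReal_rpow_rpow_div hx.1 _ hr.le, ← mul_div_assoc,
      ← ENNReal.mul_rpow_of_nonneg _ _ hr.le, mul_comm (rearr g s)]
    gcongr
    exact rearr_antitone g hx.2
  calc _ = (rearr g s ^ r *
        ∫⁻ x in Ioc 0 s, ENNReal.ofReal (x ^ (1 / p * r - 1))) ^ (1 / r) := by
        rw [ENNReal.mul_rpow_of_nonneg _ _ (by positivity), ← ENNReal.rpow_mul,
          mul_one_div_cancel hr.ne', ENNReal.rpow_one,
          lintegral_Ioc_rpow_rpow_one_div (one_div_pos.mpr hp) hr hs.le,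
          ENNReal.ofReal_mul (by positivity)]
        ring
    _ ≤ _ := by gcongr

theorem lorentzNorm_le_of_rearr_le {p ε t : ℝ} {q : ℝ≥0∞} (hq : 0 < q) (hε : 0 < ε)
    (ht : 0 < t) {g : ℝ → ℝ} {A : ℝ≥0∞}
    (hg : ∀ s ∈ Ioc 0 t,
      ENNReal.ofReal (s ^ (1 / p)) * rearr g s ≤ A * ENNReal.ofReal (s ^ ε))
    (hg0 : ∀ s, t < s → rearr g s = 0) :
    lorentzNorm p q g ≤ A * ENNReal.ofReal (lorentzConst ε q * t ^ ε) := by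
  rw [lorentzNorm, lorentzConst]
  split_ifs with hqt
  · rw [one_mul]
    refine iSup₂_le fun s hs => ?_
    rcases le_or_gt s t with hst | hts
    · exact (hg s ⟨hs, hst⟩).trans (by gcongr; exact hs.le)
    · simp [hg0 s hts]
  set r := q.toReal
  have hr : 0 < r := ENNReal.toReal_pos hq.ne' hqt
  have hint :
      ∫⁻ s in Ioi 0, (ENNReal.ofReal (s ^ (1 / p)) * rearr g s) ^ r / ENNReal.ofReal s ≤
        A ^ r * ∫⁻ x in Ioc 0 t, ENNReal.ofReal (x ^ (ε * r - 1)) := by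
    rw [← Ioc_union_Ioi_eq_Ioi ht.le, ← lintegral_const_mul _ (by fun_prop)]
    refine (lintegral_union_le _ _ _).trans ?_
    rw [setLIntegral_congr_fun measurableSet_Ioi fun s hs => by
        rw [hg0 s hs, mul_zero, ENNReal.zero_rpow_of_pos hr, ENNReal.zero_div],
      lintegral_zero, add_zero]
    refine setLIntegral_mono' measurableSet_Ioc fun s hs => ?_
    rw [← ofReal_rpow_rpow_div hs.1 _ hr.le, ← mul_div_assoc,
      ← ENNReal.mul_rpow_of_nonneg _ _ hr.le]
    exact ENNReal.div_le_div_right (ENNReal.rpow_le_rpow (hg s hs) hr.le) _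
  calc _ ≤ (A ^ r * ∫⁻ x in Ioc 0 t, ENNReal.ofReal (x ^ (ε * r - 1))) ^ (1 / r) := by gcongr
    _ = _ := by
        rw [ENNReal.mul_rpow_of_nonneg _ _ (by positivity), ← ENNReal.rpow_mul,
          mul_one_div_cancel hr.ne', ENNReal.rpow_one,
          lintegral_Ioc_rpow_rpow_one_div hε hr ht.le]

/-- The part of `f` above the level `m`: `sign f · (|f| - m)₊`. -/
def excess (f : ℝ → ℝ) (m : ℝ) (s : ℝ) : ℝ :=
  f s - max (-m) (min m (f s))

theorem measurable_excess {f : ℝ → ℝ} (hf : Measurable f) (m : ℝ) :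
    Measurable (excess f m) :=
  hf.sub (measurable_const.max (measurable_const.min hf))

theorem abs_excess (f : ℝ → ℝ) {m : ℝ} (hm : 0 ≤ m) (s : ℝ) :
    |excess f m s| = max (|f s| - m) 0 := by
  unfold excess
  simp only [abs_eq_max_neg, max_def, min_def]
  split_ifs <;> linarith

theorem abs_sub_excess_le (f : ℝ → ℝ) {m : ℝ} (hm : 0 ≤ m) (s : ℝ) :
    |f s - excess f m s| ≤ m := by
  rw [excess, sub_sub_cancel, abs_le]
  exact ⟨le_max_left _ _, max_le (by linarith) (min_le_left _ _)⟩

theorem rearr_excess_le (f : ℝ → ℝ) {m : ℝ} (hm : 0 ≤ m) (t : ℝ) :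
    rearr (excess f m) t ≤ rearr f t :=
  rearr_le_rearr_of_abs_le (fun s _ => by
    rw [abs_excess f hm]; exact max_le (by linarith) (abs_nonneg _)) t

theorem rearr_excess_rearr_eq_zero {f : ℝ → ℝ} {t s : ℝ} (hft : rearr f t ≠ ⊤)
    (hts : t ≤ s) :
    rearr (excess f (rearr f t).toReal) s = 0 := by
  refine le_antisymm (rearr_le_of_distf_le ?_) zero_le
  refine le_trans (measure_mono ?_) ((distf_rearr_le hft).trans (ENNReal.ofReal_le_ofReal hts))
  rintro x ⟨hx, hlt⟩
  refine ⟨hx, ?_⟩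
  rw [abs_excess f ENNReal.toReal_nonneg, ENNReal.ofReal_pos, lt_max_iff] at hlt
  rw [← ENNReal.ofReal_toReal hft]
  exact (ENNReal.ofReal_lt_ofReal_iff_of_nonneg ENNReal.toReal_nonneg).mpr
    (by rcases hlt with h | h <;> linarith)

theorem lorentzKinf_le {p τ : ℝ} {q : ℝ≥0∞} {f g h : ℝ → ℝ} (hgh : g + h = f)
    (hg : Measurable g) (hh : Measurable h) :
    lorentzKinf p q τ f ≤
      lorentzNorm p q g + ENNReal.ofReal τ * eLpNorm h ⊤ (volume.restrict (Ioi 0)) :=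
  iInf₂_le (g, h) ⟨hgh, hg, hh⟩

theorem lorentzKinf_le_lorentzNorm_excess_add {p : ℝ} {q : ℝ≥0∞} {f : ℝ → ℝ}
    (hf : Measurable f) {t : ℝ} (hft : rearr f t ≠ ⊤) (τ : ℝ) :
    lorentzKinf p q τ f ≤
      lorentzNorm p q (excess f (rearr f t).toReal) + ENNReal.ofReal τ * rearr f t := by
  set m := (rearr f t).toReal
  have hm : 0 ≤ m := ENNReal.toReal_nonneg
  refine (lorentzKinf_le (g := excess f m) (h := fun s => f s - excess f m s)
    (by ext; simp) (measurable_excess hf m) (hf.sub (measurable_excess hf m))).trans ?_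
  gcongr
  rw [eLpNorm_exponent_top, ← ENNReal.ofReal_toReal hft]
  exact eLpNormEssSup_le_of_ae_bound (ae_of_all _ fun s => abs_sub_excess_le f hm s)

theorem ofReal_mul_rearr_le_lorentzKinf {p : ℝ} {q : ℝ≥0∞} (hp : 0 < p) (hq : 0 < q)
    (f : ℝ → ℝ) {τ : ℝ} (hτ : 0 < τ) :
    ENNReal.ofReal (min 1 (lorentzConst (1 / p) q)) * (ENNReal.ofReal τ * rearr f (τ ^ p)) ≤
      lorentzKinf p q τ f := by
  refine le_iInf₂ fun g ⟨hg, _, _⟩ => ?_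
  set c := ENNReal.ofReal (min 1 (lorentzConst (1 / p) q))
  have hτp : (τ ^ p) ^ (1 / p) = τ := by
    rw [← Real.rpow_mul hτ.le, mul_one_div_cancel hp.ne', Real.rpow_one]
  have hlorentz : c * (ENNReal.ofReal τ * rearr g.1 (τ ^ p)) ≤ lorentzNorm p q g.1 := by
    refine le_trans ?_ (hτp ▸ ofReal_lorentzConst_mul_le_lorentzNorm hp hq g.1
      (Real.rpow_pos_of_pos hτ p))
    gcongr
    exact ENNReal.ofReal_le_ofReal (min_le_right _ _)
  have hc : c ≤ 1 := ENNReal.ofReal_le_one.mpr (min_le_left _ _)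
  calc c * (ENNReal.ofReal τ * rearr f (τ ^ p))
      ≤ c * (ENNReal.ofReal τ * rearr g.1 (τ ^ p)) +
          c * (ENNReal.ofReal τ * eLpNorm g.2 ⊤ (volume.restrict (Ioi 0))) := by
        rw [← mul_add, ← mul_add, ← hg]
        gcongr
        exact rearr_add_le _ _ _
    _ ≤ _ := add_le_add hlorentz (mul_le_of_le_one_left zero_le hc)

theorem ofReal_rpow_neg_mul_ofReal_rpow {t : ℝ} (ht : 0 < t) (a : ℝ) :
    ENNReal.ofReal (t ^ (-a)) * ENNReal.ofReal (t ^ a) = 1 := by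
  rw [← ENNReal.ofReal_mul (Real.rpow_nonneg ht.le _), ← Real.rpow_add ht, neg_add_cancel,
    Real.rpow_zero, ENNReal.ofReal_one]

/-- `ρ_E (kProfile p₀ q₀ f)` is the quasi-norm of `f` in `(L_{p₀,q₀}, L_∞)_{p₀,p₀;E}`. -/
def kProfile (p : ℝ) (q : ℝ≥0∞) (f : ℝ → ℝ) (t : ℝ) : ℝ≥0∞ :=
  ENNReal.ofReal (t ^ (-(1 / p))) * lorentzKinf p q (t ^ (1 / p)) f

theorem ofReal_mul_rearr_le_kProfile {p : ℝ} {q : ℝ≥0∞} (hp : 0 < p) (hq : 0 < q)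
    (f : ℝ → ℝ) {t : ℝ} (ht : 0 < t) :
    ENNReal.ofReal (min 1 (lorentzConst (1 / p) q)) * rearr f t ≤ kProfile p q f t := by
  have hτ : (t ^ (1 / p)) ^ p = t := by
    rw [← Real.rpow_mul ht.le, one_div_mul_cancel hp.ne', Real.rpow_one]
  have hK := ofReal_mul_rearr_le_lorentzKinf hp hq f (Real.rpow_pos_of_pos ht (1 / p))
  rw [hτ] at hK
  calc _ = ENNReal.ofReal (t ^ (-(1 / p))) * ENNReal.ofReal (t ^ (1 / p)) *
        (ENNReal.ofReal (min 1 (lorentzConst (1 / p) q)) * rearr f t) := by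
        rw [ofReal_rpow_neg_mul_ofReal_rpow ht, one_mul]
    _ = ENNReal.ofReal (t ^ (-(1 / p))) * (ENNReal.ofReal (min 1 (lorentzConst (1 / p) q)) *
        (ENNReal.ofReal (t ^ (1 / p)) * rearr f t)) := by ring
    _ ≤ kProfile p q f t := by unfold kProfile; gcongr

/-- Blocks `(B^{k+1} t, B^k t]` of a geometric partition of `(0, t]`, weighted by `B^{k r}`. -/
def rearrGeomSum (B r : ℝ) (f : ℝ → ℝ) (t : ℝ) : ℝ≥0∞ :=
  ∑' k : ℕ, ENNReal.ofReal ((B ^ k) ^ r) * rearr f (B ^ (k + 1) * t)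

theorem mul_rpow_le_of_mul_mul_lt {a ε B b t s : ℝ} (hε : 0 ≤ ε) (hB : 0 < B) (hb : 0 < b)
    (ht : 0 < t) (hs : B * b * t < s) :
    (b * t) ^ a ≤ B ^ (-ε) * t ^ (a - ε) * s ^ ε * b ^ (a - ε) := by
  have hsplit : (b * t) ^ a = b ^ (a - ε) * t ^ (a - ε) * (b * t) ^ ε := by
    rw [← Real.mul_rpow hb.le ht.le, ← Real.rpow_add (by positivity), sub_add_cancel]
  have hshift : (b * t) ^ ε = B ^ (-ε) * (B * b * t) ^ ε := by
    rw [mul_assoc B, Real.mul_rpow hB.le (by positivity), ← mul_assoc, ← Real.rpow_add hB,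
      neg_add_cancel, Real.rpow_zero, one_mul]
  have hle : (B * b * t) ^ ε ≤ s ^ ε := Real.rpow_le_rpow (by positivity) hs.le hε
  rw [hsplit, hshift]
  have : 0 ≤ b ^ (a - ε) * t ^ (a - ε) * B ^ (-ε) := by positivity
  nlinarith

theorem ofReal_rpow_mul_rearr_le_rearrGeomSum {a ε B s t : ℝ} (ha : 0 ≤ a) (hε : 0 ≤ ε)
    (hB0 : 0 < B) (hB1 : B < 1) (f : ℝ → ℝ) (hs : 0 < s) (hst : s ≤ t) :
    ENNReal.ofReal (s ^ a) * rearr f s ≤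
      ENNReal.ofReal (B ^ (-ε) * t ^ (a - ε)) * rearrGeomSum B (a - ε) f t *
        ENNReal.ofReal (s ^ ε) := by
  have ht : 0 < t := hs.trans_le hst
  obtain ⟨k, hk1, hk2⟩ :=
    exists_nat_pow_near_of_lt_one (div_pos hs ht) ((div_le_one ht).mpr hst) hB0 hB1
  rw [lt_div_iff₀ ht, pow_succ'] at hk1
  rw [div_le_iff₀ ht] at hk2
  calc ENNReal.ofReal (s ^ a) * rearr f s
      ≤ ENNReal.ofReal ((B ^ k * t) ^ a) * rearr f (B ^ (k + 1) * t) := by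
        gcongr
        exact rearr_antitone f (by rw [pow_succ']; exact hk1.le)
    _ ≤ ENNReal.ofReal (B ^ (-ε) * t ^ (a - ε) * s ^ ε * (B ^ k) ^ (a - ε)) *
          rearr f (B ^ (k + 1) * t) := by
        gcongr
        exact mul_rpow_le_of_mul_mul_lt hε hB0 (pow_pos hB0 k) ht hk1
    _ = ENNReal.ofReal (B ^ (-ε) * t ^ (a - ε)) *
          (ENNReal.ofReal ((B ^ k) ^ (a - ε)) * rearr f (B ^ (k + 1) * t)) *
          ENNReal.ofReal (s ^ ε) := by
        rw [ENNReal.ofReal_mul (by positivity), ENNReal.ofReal_mul (by positivity),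
          ENNReal.ofReal_mul (by positivity)]
        ring
    _ ≤ _ := by
        gcongr
        exact ENNReal.le_tsum (f := fun k => ENNReal.ofReal ((B ^ k) ^ (a - ε)) *
          rearr f (B ^ (k + 1) * t)) k

theorem kProfile_le {p ε B : ℝ} {q : ℝ≥0∞} (hp : 0 < p) (hq : 0 < q) (hε : 0 < ε)
    (hB0 : 0 < B) (hB1 : B < 1) {f : ℝ → ℝ} (hf : Measurable f) {t : ℝ} (ht : 0 < t) :
    kProfile p q f t ≤
      rearr f t +
        ENNReal.ofReal (lorentzConst ε q * B ^ (-ε)) * rearrGeomSum B (1 / p - ε) f t := by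
  rcases eq_or_ne (rearr f t) ⊤ with hft | hft
  · simp [hft]
  set T := rearrGeomSum B (1 / p - ε) f t
  have hexcess : lorentzNorm p q (excess f (rearr f t).toReal) ≤
      ENNReal.ofReal (B ^ (-ε) * t ^ (1 / p - ε)) * T *
        ENNReal.ofReal (lorentzConst ε q * t ^ ε) :=
    lorentzNorm_le_of_rearr_le hq hε ht
      (fun s hs => le_trans (by gcongr; exact rearr_excess_le f ENNReal.toReal_nonneg s)
        (ofReal_rpow_mul_rearr_le_rearrGeomSum (one_div_pos.mpr hp).le hε.le hB0 hB1 f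
          hs.1 hs.2))
      (fun s hs => rearr_excess_rearr_eq_zero hft hs.le)
  have hpow : t ^ (-(1 / p)) * (B ^ (-ε) * t ^ (1 / p - ε)) * (lorentzConst ε q * t ^ ε) =
      lorentzConst ε q * B ^ (-ε) := by
    have : t ^ (-(1 / p)) * t ^ (1 / p - ε) * t ^ ε = 1 := by
      rw [← Real.rpow_add ht, ← Real.rpow_add ht, show -(1 / p) + (1 / p - ε) + ε = 0 by ring,
        Real.rpow_zero]
    linear_combination (lorentzConst ε q * B ^ (-ε)) * this
  calc kProfile p q f t
      ≤ ENNReal.ofReal (t ^ (-(1 / p))) *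
          (ENNReal.ofReal (B ^ (-ε) * t ^ (1 / p - ε)) * T *
            ENNReal.ofReal (lorentzConst ε q * t ^ ε) +
          ENNReal.ofReal (t ^ (1 / p)) * rearr f t) := by
        unfold kProfile
        gcongr
        exact (lorentzKinf_le_lorentzNorm_excess_add hf hft _).trans (by gcongr)
    _ = (ENNReal.ofReal (t ^ (-(1 / p))) * ENNReal.ofReal (B ^ (-ε) * t ^ (1 / p - ε)) *
          ENNReal.ofReal (lorentzConst ε q * t ^ ε)) * T +
        (ENNReal.ofReal (t ^ (-(1 / p))) * ENNReal.ofReal (t ^ (1 / p))) * rearr f t := by ring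
    _ = _ := by
        rw [← ENNReal.ofReal_mul (by positivity), ← ENNReal.ofReal_mul (by positivity), hpow,
          ofReal_rpow_neg_mul_ofReal_rpow ht, one_mul, add_comm]

namespace RIQBFS

variable (E : RIQBFS)

theorem rho_zero : E.ρ (fun _ => 0) = 0 :=
  (E.eq_zero_iff _).mpr EventuallyEq.rfl

theorem rho_ofReal_mul (r : ℝ) (u : ℝ → ℝ≥0∞) :
    E.ρ (fun t => ENNReal.ofReal r * u t) = ENNReal.ofReal r * E.ρ u :=
  E.smul_eq r.toNNReal u

theorem rho_mono_of_forall {f g : ℝ → ℝ≥0∞} (h : ∀ t, 0 < t → g t ≤ f t) :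
    E.ρ g ≤ E.ρ f :=
  E.mono f g ((ae_restrict_iff' measurableSet_Ioi).mpr (ae_of_all _ h))

theorem rho_sum_range_le (u : ℕ → ℝ → ℝ≥0∞) (n : ℕ) :
    E.ρ (fun t => ∑ k ∈ Finset.range n, u k t) ≤
      ∑ k ∈ Finset.range n, ENNReal.ofReal E.C ^ (k + 1) * E.ρ (u k) := by
  induction n generalizing u with
  | zero => simp [rho_zero]
  | succ n ih =>
    simp only [Finset.sum_range_succ']
    calc E.ρ (fun t => ∑ k ∈ Finset.range n, u (k + 1) t + u 0 t)
        ≤ ENNReal.ofReal E.C * (E.ρ (fun t => ∑ k ∈ Finset.range n, u (k + 1) t) + E.ρ (u 0)) :=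
          E.quasi_triangle _ _
      _ ≤ ENNReal.ofReal E.C *
            (∑ k ∈ Finset.range n, ENNReal.ofReal E.C ^ (k + 1) * E.ρ (u (k + 1)) + E.ρ (u 0)) := by
          gcongr
          exact ih _
      _ = _ := by
          rw [mul_add, Finset.mul_sum]
          simp only [pow_succ, zero_add, pow_zero, one_mul, mul_assoc,
            mul_comm (ENNReal.ofReal E.C)]

theorem rho_tsum_le (u : ℕ → ℝ → ℝ≥0∞) :
    E.ρ (fun t => ∑' k, u k t) ≤ ∑' k, ENNReal.ofReal E.C ^ (k + 1) * E.ρ (u k) := by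
  have hlim := E.fatou (fun n t => ∑ k ∈ Finset.range n, u k t) (fun t => ∑' k, u k t)
    (fun n => ae_of_all _ fun t => by simp [Finset.sum_range_succ])
    (ae_of_all _ fun t => ENNReal.tendsto_nat_tsum _)
  exact le_of_tendsto' hlim fun n => (E.rho_sum_range_le u n).trans (ENNReal.sum_le_tsum _)

theorem rho_rearr_comp_mul_le {f : ℝ → ℝ} (hf : Measurable f) {a : ℝ} (ha : 0 < a)
    (hfin : E.ρ (rearr f) ≠ ⊤) :
    E.ρ (fun t => rearr f (a * t)) ≤ dilNorm E a * E.ρ (rearr f) := by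
  set N := E.ρ (rearr f)
  rcases eq_or_ne N 0 with hN0 | hN0
  · have hzero := (E.eq_zero_iff _).mp hN0
    rw [(E.eq_zero_iff _).mpr ((ae_restrict_iff' measurableSet_Ioi).mpr
      (ae_of_all _ fun t ht => rearr_eq_zero_of_ae hzero (mul_pos ha ht)))]
    exact zero_le
  set c := N.toReal
  have hc : 0 < c := ENNReal.toReal_pos hN0 hfin
  have hcN : ENNReal.ofReal c⁻¹ * N = 1 := by
    rw [ENNReal.ofReal_inv_of_pos hc, ENNReal.ofReal_toReal hfin, ENNReal.inv_mul_cancel hN0 hfin]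
  have hnorm : E.normE (fun s => c⁻¹ * f s) = 1 := by
    rw [normE, funext (rearr_const_mul f (inv_pos.mpr hc)), rho_ofReal_mul, hcN]
  have hdil : ENNReal.ofReal c⁻¹ * E.ρ (fun t => rearr f (a * t)) ≤ dilNorm E a := by
    refine le_trans (le_of_eq ?_)
      (le_iSup₂_of_le _ (hf.const_mul c⁻¹) (le_iSup_of_le hnorm.le le_rfl))
    rw [normE, ← rho_ofReal_mul]
    congr 1
    ext t
    rw [rearr_comp_mul (fun s => c⁻¹ * f s) ha, rearr_const_mul f (inv_pos.mpr hc)]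
  calc E.ρ (fun t => rearr f (a * t))
      = N * (ENNReal.ofReal c⁻¹ * E.ρ (fun t => rearr f (a * t))) := by
        rw [← mul_assoc, mul_comm N, hcN, one_mul]
    _ ≤ N * dilNorm E a := by gcongr
    _ = dilNorm E a * N := mul_comm _ _

end RIQBFS

theorem exists_dilNorm_le_of_lt_lowerBoyd {E : RIQBFS} {p : ℝ}
    (h : ENNReal.ofReal p < lowerBoyd E) :
    ∃ p' c : ℝ, p < p' ∧ 0 < c ∧ ∀ a : ℝ, 0 < a → a < 1 →
      dilNorm E a ≤ ENNReal.ofReal (c * a ^ (-(1 / p'))) := by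
  obtain ⟨_, ⟨p', ⟨hp', c, hc, hbound⟩, rfl⟩, hlt⟩ := lt_sSup_iff.mp h
  exact ⟨p', c, (ENNReal.ofReal_lt_ofReal_iff hp').mp hlt, hc, hbound⟩

open scoped Topology in
theorem exists_mul_rpow_le_half {C ε : ℝ} (hε : 0 < ε) :
    ∃ B : ℝ, 0 < B ∧ B < 1 ∧ C * B ^ ε ≤ 1 / 2 := by
  have hlim : Tendsto (fun B : ℝ => C * B ^ ε) (𝓝[>] 0) (𝓝 0) := by
    have := ((Real.continuousAt_rpow_const 0 ε (Or.inr hε.le)).const_mul C).tendsto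
    rw [Real.zero_rpow hε.ne', mul_zero] at this
    exact this.mono_left nhdsWithin_le_nhds
  obtain ⟨B, hB, hB'⟩ :=
    ((hlim.eventually (ge_mem_nhds (by norm_num : (0 : ℝ) < 1 / 2))).and
      (Ioo_mem_nhdsGT one_pos)).exists
  exact ⟨B, hB'.1, hB'.2, hB⟩

/-- The Boyd estimate `‖D_a‖ ≲ a^{-1/p'}` makes the `k`-th block of `rearrGeomSum` cost
`(C B^{r - 1/p'})^k` times `ρ(f^*)`, so a small enough `B` beats the quasi-triangle constant. -/
theorem RIQBFS.rho_rearrGeomSum_le (E : RIQBFS) {f : ℝ → ℝ} (hf : Measurable f)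
    (hfin : E.ρ (rearr f) ≠ ⊤) {p' c B r : ℝ} (hc : 0 ≤ c)
    (hboyd : ∀ a : ℝ, 0 < a → a < 1 → dilNorm E a ≤ ENNReal.ofReal (c * a ^ (-(1 / p'))))
    (hB0 : 0 < B) (hB1 : B < 1) (hratio : E.C * B ^ (r - 1 / p') ≤ 1 / 2) :
    E.ρ (rearrGeomSum B r f) ≤
      ENNReal.ofReal (2 * (E.C * c * B ^ (-(1 / p')))) * E.ρ (rearr f) := by
  set N := E.ρ (rearr f)
  set D := E.C * c * B ^ (-(1 / p'))
  have hC : 0 ≤ E.C := zero_le_one.trans E.one_le_C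
  have hterm : ∀ k : ℕ, ENNReal.ofReal E.C ^ (k + 1) *
      E.ρ (fun t => ENNReal.ofReal ((B ^ k) ^ r) * rearr f (B ^ (k + 1) * t)) ≤
        ENNReal.ofReal D * N * 2⁻¹ ^ k := by
    intro k
    have hreal : E.C ^ (k + 1) * (B ^ k) ^ r * (c * (B ^ (k + 1)) ^ (-(1 / p'))) ≤
        D * (1 / 2) ^ k := by
      have hgeom : E.C ^ (k + 1) * (B ^ k) ^ r * (c * (B ^ (k + 1)) ^ (-(1 / p'))) =
          D * (E.C * B ^ (r - 1 / p')) ^ k := by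
        rw [← Real.rpow_pow_comm hB0.le, ← Real.rpow_pow_comm hB0.le, sub_eq_add_neg,
          Real.rpow_add hB0]
        ring
      rw [hgeom]
      gcongr
    calc ENNReal.ofReal E.C ^ (k + 1) *
          E.ρ (fun t => ENNReal.ofReal ((B ^ k) ^ r) * rearr f (B ^ (k + 1) * t))
        ≤ ENNReal.ofReal E.C ^ (k + 1) * (ENNReal.ofReal ((B ^ k) ^ r) *
            (ENNReal.ofReal (c * (B ^ (k + 1)) ^ (-(1 / p'))) * N)) := by
          rw [E.rho_ofReal_mul]
          gcongr
          exact (E.rho_rearr_comp_mul_le hf (pow_pos hB0 _) hfin).trans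
            (by gcongr; exact hboyd _ (pow_pos hB0 _) (pow_lt_one₀ hB0.le hB1 k.succ_ne_zero))
      _ = ENNReal.ofReal (E.C ^ (k + 1) * (B ^ k) ^ r * (c * (B ^ (k + 1)) ^ (-(1 / p')))) *
            N := by
          rw [← mul_assoc, ← mul_assoc, ← ENNReal.ofReal_pow hC,
            ← ENNReal.ofReal_mul (by positivity), ← ENNReal.ofReal_mul (by positivity)]
      _ ≤ ENNReal.ofReal (D * (1 / 2) ^ k) * N := by gcongr
      _ = ENNReal.ofReal D * N * 2⁻¹ ^ k := by
          rw [ENNReal.ofReal_mul (by positivity), ENNReal.ofReal_pow (by norm_num), one_div,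
            ENNReal.ofReal_inv_of_pos two_pos, ENNReal.ofReal_ofNat]
          ring
  calc E.ρ (rearrGeomSum B r f)
      ≤ ∑' k : ℕ, ENNReal.ofReal E.C ^ (k + 1) *
          E.ρ (fun t => ENNReal.ofReal ((B ^ k) ^ r) * rearr f (B ^ (k + 1) * t)) :=
        E.rho_tsum_le fun k t => ENNReal.ofReal ((B ^ k) ^ r) * rearr f (B ^ (k + 1) * t)
    _ ≤ ∑' k : ℕ, ENNReal.ofReal D * N * 2⁻¹ ^ k := ENNReal.tsum_le_tsum hterm
    _ = ENNReal.ofReal (2 * D) * N := by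
        rw [ENNReal.tsum_mul_left, ENNReal.tsum_geometric, ENNReal.one_sub_inv_two, inv_inv,
          ENNReal.ofReal_mul zero_le_two, ENNReal.ofReal_ofNat]
        ring

theorem RIQBFS.ofReal_mul_rho_rearr_le_rho_kProfile (E : RIQBFS) {p : ℝ} {q : ℝ≥0∞}
    (hp : 0 < p) (hq : 0 < q) (f : ℝ → ℝ) :
    ENNReal.ofReal (min 1 (lorentzConst (1 / p) q)) * E.ρ (rearr f) ≤ E.ρ (kProfile p q f) := by
  rw [← E.rho_ofReal_mul]
  exact E.rho_mono_of_forall fun t ht => ofReal_mul_rearr_le_kProfile hp hq f ht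

theorem RIQBFS.exists_rho_kProfile_le (E : RIQBFS) {p : ℝ} {q : ℝ≥0∞} (hp : 0 < p)
    (hq : 0 < q) (hpE : ENNReal.ofReal p < lowerBoyd E) :
    ∃ C : ℝ, 0 < C ∧ ∀ f : ℝ → ℝ, Measurable f →
      E.ρ (kProfile p q f) ≤ ENNReal.ofReal C * E.ρ (rearr f) := by
  obtain ⟨p', c, hpp', hc, hboyd⟩ := exists_dilNorm_le_of_lt_lowerBoyd hpE
  set ε := (1 / p - 1 / p') / 2
  have hε : 0 < ε := by have := one_div_lt_one_div_of_lt hp hpp'; positivity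
  obtain ⟨B, hB0, hB1, hB⟩ := exists_mul_rpow_le_half (C := E.C) hε
  have hC : 0 < E.C := zero_lt_one.trans_le E.one_le_C
  set κ := lorentzConst ε q * B ^ (-ε)
  set D := 2 * (E.C * c * B ^ (-(1 / p')))
  have hκ : 0 < κ := mul_pos (lorentzConst_pos hε hq) (Real.rpow_pos_of_pos hB0 _)
  refine ⟨E.C * (1 + κ * D), by positivity, fun f hf => ?_⟩
  rcases eq_or_ne (E.ρ (rearr f)) ⊤ with hN | hN
  · rw [hN, ENNReal.mul_top (by positivity)]
    exact le_top
  have hratio : E.C * B ^ ((1 / p - ε) - 1 / p') ≤ 1 / 2 := by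
    rwa [show (1 / p - ε) - 1 / p' = ε by ring]
  set N := E.ρ (rearr f)
  set T := rearrGeomSum B (1 / p - ε)
  calc E.ρ (kProfile p q f)
      ≤ E.ρ (fun t => rearr f t + ENNReal.ofReal κ * T f t) :=
        E.rho_mono_of_forall fun t ht => kProfile_le hp hq hε hB0 hB1 hf ht
    _ ≤ ENNReal.ofReal E.C * (N + ENNReal.ofReal κ * E.ρ (T f)) := by
        rw [← E.rho_ofReal_mul]
        exact E.quasi_triangle _ _
    _ ≤ ENNReal.ofReal E.C * (N + ENNReal.ofReal κ * (ENNReal.ofReal D * N)) := by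
        gcongr
        exact E.rho_rearrGeomSum_le hf hN hc.le hboyd hB0 hB1 hratio
    _ = ENNReal.ofReal (E.C * (1 + κ * D)) * N := by
        rw [ENNReal.ofReal_mul hC.le, ENNReal.ofReal_add zero_le_one (by positivity),
          ENNReal.ofReal_mul hκ.le, ENNReal.ofReal_one]
        ring

/-- Let `E` be a r.i. quasi-Banach function space with lower Boyd index `p_E`, let
`0 < q₀ ≤ ∞` and `0 < p₀ < p_E`. Then `(L_{p₀,q₀}, L_∞)_{p₀,p₀;E} = E` with equivalent
quasi-norms: there exist `c, C > 0` such that for every `f ∈ L_{p₀,q₀} + L_∞`,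
`c ρ_E(f^*) ≤ ρ_E(t ↦ t^{-1/p₀} K(t^{1/p₀}, f; L_{p₀,q₀}, L_∞)) ≤ C ρ_E(f^*)`. -/
theorem stmt11 (E : RIQBFS) (p0 : ℝ) (q0 : ℝ≥0∞) (hq0 : 0 < q0)
    (hp0 : 0 < p0) (hp0E : ENNReal.ofReal p0 < lowerBoyd E) :
    ∃ c C : ℝ, 0 < c ∧ 0 < C ∧ ∀ f : ℝ → ℝ, Measurable f →
      lorentzKinf p0 q0 1 f < ⊤ →
      ENNReal.ofReal c * E.ρ (rearr f) ≤
          E.ρ (fun t => ENNReal.ofReal (t ^ (-(1 / p0))) *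
            lorentzKinf p0 q0 (t ^ (1 / p0)) f) ∧
        E.ρ (fun t => ENNReal.ofReal (t ^ (-(1 / p0))) *
            lorentzKinf p0 q0 (t ^ (1 / p0)) f) ≤
          ENNReal.ofReal C * E.ρ (rearr f) := by
  obtain ⟨C, hC, hupper⟩ := E.exists_rho_kProfile_le hp0 hq0 hp0E
  exact ⟨_, C, lt_min one_pos (lorentzConst_pos (one_div_pos.mpr hp0) hq0), hC,
    fun f hf _ => ⟨E.ofReal_mul_rho_rearr_le_rho_kProfile hp0 hq0 f, hupper f hf⟩⟩
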